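/- arXiv:math/0504522 — 4 statements merged into one kernel-verified Lean document; each statement's English description precedes it below -/
import Mathlib

section
/- For every simple undirected graph G on vertices {1,…,n}, the graph code 𝒞(G) is a self-dual additive code: 𝒞(G) = 𝒞(G)^⊥ with respect to the Hermitian trace inner product. -/
open Finset
open scoped Classical

noncomputable section

/-- The Hermitian trace inner product on `GF(4)^n`. -/
def trinner {n : ℕ} (u v : Fin n → GaloisField 2 2) : GaloisField 2 2 :=
  ∑ i, (u i * v i ^ 2 + u i ^ 2 * v i)

/-- The dual of a set of vectors with respect to the Hermitian trace inner product. -/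
def trdual {n : ℕ} (C : Set (Fin n → GaloisField 2 2)) : Set (Fin n → GaloisField 2 2) :=
  {v | ∀ u ∈ C, trinner u v = 0}

/-- Row `i` of the matrix `Γ + ωI` associated to a graph `G`. -/
def graphRow {n : ℕ} (ω : GaloisField 2 2) (G : SimpleGraph (Fin n)) (i : Fin n) :
    Fin n → GaloisField 2 2 :=
  fun j => if i = j then ω else if G.Adj i j then 1 else 0

/-- The graph code of `G`: the `GF(2)`-linear span of the rows of `Γ + ωI`. -/
def graphCode {n : ℕ} (ω : GaloisField 2 2) (G : SimpleGraph (Fin n)) :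
    Submodule (ZMod 2) (Fin n → GaloisField 2 2) :=
  Submodule.span (ZMod 2) (Set.range (graphRow ω G))

lemma gf4_two_eq_zero : (2 : GaloisField 2 2) = 0 := by
  have := CharP.cast_eq_zero (GaloisField 2 2) 2
  exact_mod_cast this

lemma gf4_pow_four (x : GaloisField 2 2) : x ^ 4 = x := by
  have : Fintype (GaloisField 2 2) := Fintype.ofFinite _
  have h := FiniteField.pow_card x
  have hc : Fintype.card (GaloisField 2 2) = 4 := by
    rw [← Nat.card_eq_fintype_card, GaloisField.card 2 2 (by norm_num)]
    norm_num
  rwa [hc] at h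

lemma gf4_trace (x : GaloisField 2 2) : x + x ^ 2 = 0 ∨ x + x ^ 2 = 1 := by
  have h2 := gf4_two_eq_zero
  have hx4 := gf4_pow_four x
  have ht : (x + x ^ 2) * ((x + x ^ 2) - 1) = 0 := by
    linear_combination x ^ 3 * h2 + hx4
  rcases mul_eq_zero.mp ht with h | h
  · exact Or.inl h
  · exact Or.inr (sub_eq_zero.mp h)

lemma trinner_zero_left {n : ℕ} (v : Fin n → GaloisField 2 2) : trinner 0 v = 0 := by
  simp [trinner]

lemma trinner_symm {n : ℕ} (u v : Fin n → GaloisField 2 2) : trinner u v = trinner v u := by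
  unfold trinner
  exact Finset.sum_congr rfl fun j _ => by ring

lemma trinner_add_left {n : ℕ} (u u' v : Fin n → GaloisField 2 2) :
    trinner (u + u') v = trinner u v + trinner u' v := by
  have h2 := gf4_two_eq_zero
  unfold trinner
  rw [← Finset.sum_add_distrib]
  refine Finset.sum_congr rfl fun j _ => ?_
  simp only [Pi.add_apply]
  linear_combination (u j * u' j * v j) * h2

lemma trinner_self {n : ℕ} (v : Fin n → GaloisField 2 2) : trinner v v = 0 := by
  have h2 := gf4_two_eq_zero
  unfold trinner
  refine Finset.sum_eq_zero fun j _ => ?_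
  linear_combination v j ^ 3 * h2

lemma trinner_row {n : ℕ} (ω : GaloisField 2 2) (G : SimpleGraph (Fin n)) (i : Fin n)
    (v : Fin n → GaloisField 2 2) :
    trinner (graphRow ω G i) v
      = (ω * v i ^ 2 + ω ^ 2 * v i) + ∑ j, (if G.Adj i j then v j ^ 2 + v j else 0) := by
  unfold trinner graphRow
  have hterm : ∀ j, ((if i = j then ω else if G.Adj i j then 1 else 0) * v j ^ 2
      + (if i = j then ω else if G.Adj i j then 1 else 0) ^ 2 * v j)
      = (if i = j then ω * v j ^ 2 + ω ^ 2 * v j else 0)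
        + (if G.Adj i j then v j ^ 2 + v j else 0) := by
    intro j
    by_cases h : i = j
    · subst h; simp [G.irrefl]
    · simp only [if_neg h]
      by_cases ha : G.Adj i j
      · simp only [if_pos ha, zero_add, one_pow, one_mul]
      · simp [ha]
  rw [Finset.sum_congr rfl fun j _ => hterm j, Finset.sum_add_distrib, Finset.sum_ite_eq]
  simp

lemma trinner_row_row {n : ℕ} (ω : GaloisField 2 2) (hω : ω ^ 2 = ω + 1)
    (G : SimpleGraph (Fin n)) (i k : Fin n) :
    trinner (graphRow ω G i) (graphRow ω G k) = 0 := by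
  have h2 := gf4_two_eq_zero
  have hω1 : ω ^ 2 + ω = 1 := by linear_combination hω + ω * h2
  by_cases hik : i = k
  · subst hik; exact trinner_self _
  · rw [trinner_row]
    have hki : ¬ k = i := fun h => hik h.symm
    have hsummand : ∀ j, (if G.Adj i j then (graphRow ω G k j) ^ 2 + graphRow ω G k j else 0)
        = (if k = j then (if G.Adj i j then (1 : GaloisField 2 2) else 0) else 0) := by
      intro j
      by_cases hkj : k = j
      · subst hkj
        simp only [graphRow, if_pos rfl, if_pos trivial]
        by_cases ha : G.Adj i k
        · simp [ha]; linear_combination hω1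
        · simp [ha]
      · simp only [graphRow, if_neg hkj]
        by_cases ha : G.Adj k j
        · simp [ha, hkj]
          intro _
          linear_combination h2
        · simp [ha, hkj]
    rw [Finset.sum_congr rfl fun j _ => hsummand j, Finset.sum_ite_eq]
    simp only [Finset.mem_univ, if_true]
    have hrki : graphRow ω G k i = if G.Adj k i then 1 else 0 := by
      simp [graphRow, hki]
    rw [hrki, G.adj_comm k i]
    by_cases ha : G.Adj i k
    · simp only [if_pos ha]
      linear_combination hω1 + h2
    · simp [ha]

theorem stmt3 (n : ℕ) (ω : GaloisField 2 2) (hω : ω ^ 2 = ω + 1)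
    (G : SimpleGraph (Fin n)) :
    (graphCode ω G : Set (Fin n → GaloisField 2 2)) =
      trdual (graphCode ω G : Set (Fin n → GaloisField 2 2)) := by
  have h2 := gf4_two_eq_zero
  apply Set.Subset.antisymm
  · -- code ⊆ dual
    intro w hw
    have hw' : w ∈ graphCode ω G := hw
    induction hw' using Submodule.span_induction with
    | mem w hwmem =>
      obtain ⟨k, rfl⟩ := hwmem
      intro u hu
      have hu' : u ∈ graphCode ω G := hu
      induction hu' using Submodule.span_induction with
      | mem u humem =>
        obtain ⟨i, rfl⟩ := humem
        exact trinner_row_row ω hω G i k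
      | zero => exact trinner_zero_left _
      | add x y hx hy ihx ihy =>
        rw [trinner_add_left, ihx hx, ihy hy, add_zero]
      | smul a x hx ih =>
        have hall : ∀ b : ZMod 2, b = 0 ∨ b = 1 := by decide
        rcases hall a with rfl | rfl
        · rw [zero_smul]; exact trinner_zero_left _
        · rw [one_smul]; exact ih hx
    | zero =>
      intro u hu
      rw [trinner_symm]
      exact trinner_zero_left _
    | add x y hx hy ihx ihy =>
      intro u hu
      have hx' : x ∈ graphCode ω G := hx
      have hy' : y ∈ graphCode ω G := hy
      rw [trinner_symm, trinner_add_left, trinner_symm x u, trinner_symm y u,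
        ihx hx' u hu, ihy hy' u hu, add_zero]
    | smul a x hx ih =>
      intro u hu
      have hx' : x ∈ graphCode ω G := hx
      have hall : ∀ b : ZMod 2, b = 0 ∨ b = 1 := by decide
      rcases hall a with rfl | rfl
      · rw [zero_smul, trinner_symm]; exact trinner_zero_left _
      · rw [one_smul]; exact ih hx' u hu
  · -- dual ⊆ code
    intro v hv
    have hrow : ∀ i, trinner (graphRow ω G i) v = 0 := fun i =>
      hv _ (Submodule.subset_span ⟨i, rfl⟩)
    have hveq : v = ∑ j ∈ Finset.univ.filter (fun j => v j + (v j) ^ 2 = 1),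
        graphRow ω G j := by
      funext k
      have hsum : (∑ j ∈ Finset.univ.filter (fun j => v j + (v j) ^ 2 = 1),
          graphRow ω G j) k = ∑ j, (v j + v j ^ 2) * graphRow ω G j k := by
        rw [Finset.sum_apply, Finset.sum_filter]
        refine Finset.sum_congr rfl fun j _ => ?_
        rcases gf4_trace (v j) with h | h
        · rw [h]; simp
        · rw [h]; simp
      rw [hsum]
      have hterm : ∀ j, (v j + v j ^ 2) * graphRow ω G j k
          = (if j = k then (v j + v j ^ 2) * ω else 0)
            + (if G.Adj k j then v j ^ 2 + v j else 0) := by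
        intro j
        by_cases hjk : j = k
        · subst hjk; simp [graphRow, G.irrefl]
        · simp only [graphRow, if_neg hjk]
          rw [G.adj_comm k j]
          by_cases ha : G.Adj j k
          · simp [ha]; ring
          · simp [ha]
      rw [Finset.sum_congr rfl fun j _ => hterm j, Finset.sum_add_distrib,
        Finset.sum_ite_eq']
      simp only [Finset.mem_univ, if_true]
      have hk := hrow k
      rw [trinner_row] at hk
      have hsum2 : ∑ j, (if G.Adj k j then v j ^ 2 + v j else 0)
          = ω * v k ^ 2 + ω ^ 2 * v k := by
        linear_combination hk - (ω * v k ^ 2 + ω ^ 2 * v k) * h2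
      rw [hsum2]
      linear_combination (-(v k * ω + v k ^ 2 * ω)) * h2 + (-(v k)) * hω
    rw [hveq]
    exact Submodule.sum_mem _ fun j _ => Submodule.subset_span ⟨j, rfl⟩
end
end

section
/- Every self-dual additive code C ⊆ GF(4)^n (with respect to the Hermitian trace inner product) is equivalent to a graph code: there exist a simple undirected graph G on vertices {1,…,n} and a code equivalence map f of GF(4)^n with f(C) = 𝒞(G). -/
open Finset
open scoped Classical

noncomputable section

/-- A code equivalence map of `GF(4)^n`: a permutation of coordinates followed by
nonzero scalings and possible conjugations (`x ↦ x²`) of coordinates. -/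
def IsEquivMap {n : ℕ}
    (f : (Fin n → GaloisField 2 2) → (Fin n → GaloisField 2 2)) : Prop :=
  ∃ (σ : Equiv.Perm (Fin n)) (c : Fin n → GaloisField 2 2) (e : Fin n → ℕ),
    (∀ i, c i ≠ 0) ∧ (∀ i, e i = 1 ∨ e i = 2) ∧
    ∀ u i, f u i = c i * (u (σ i)) ^ (e i)

/-!
Writing `x ∈ GF(4)` as `a + bω` with `a, b ∈ GF(2)` identifies `GF(4)^n` with
`GF(2)^n × GF(2)^n` and the trace inner product with the form `∑ aᵢdᵢ + bᵢcᵢ`, so a self-dual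
additive code becomes a Lagrangian subspace `D`. On a coordinate, the equivalence maps
`x ↦ ωx²` and `x ↦ x²` act as `(a, b) ↦ (b, a)` and `(a, b) ↦ (a + b, b)`. Applying the first
on an information set `S` of `{a | (a, 0) ∈ D}` makes `(a, b) ↦ b` injective on the image of
`D`, hence bijective by dimension count; that image is then spanned by rows `(Aᵢ, eᵢ)`, where
`A` is symmetric because `D` is isotropic. Applying the second where `Aᵢᵢ = 1` clears the
diagonal of `A`, which leaves the graph code of the graph with adjacency matrix `A`.
-/

open Module

local notation "F" => GaloisField 2 2

lemma ZMod.eq_zero_or_eq_one (x : ZMod 2) : x = 0 ∨ x = 1 := by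
  revert x; decide

namespace GF4

lemma algebraMap_sq (a : ZMod 2) : algebraMap (ZMod 2) F a ^ 2 = algebraMap (ZMod 2) F a := by
  rw [← map_pow, ZMod.pow_card]

def ofPair (ω : F) (a b : ZMod 2) : F := algebraMap (ZMod 2) F a + algebraMap (ZMod 2) F b * ω

variable {ω : F}

lemma ofPair_sq (hω : ω ^ 2 = ω + 1) (a b : ZMod 2) :
    ofPair ω a b ^ 2 = ofPair ω (a + b) b := by
  simp only [ofPair, map_add]
  linear_combination algebraMap_sq a + ω ^ 2 * algebraMap_sq b
    + algebraMap (ZMod 2) F b * hω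
    + algebraMap (ZMod 2) F a * algebraMap (ZMod 2) F b * ω * CharTwo.two_eq_zero (R := F)

lemma ofPair_swap (hω : ω ^ 2 = ω + 1) (a b : ZMod 2) :
    ofPair ω b a = ω * ofPair ω a b ^ 2 := by
  rw [ofPair_sq hω]
  simp only [ofPair, map_add]
  linear_combination (-algebraMap (ZMod 2) F b) * hω
    - algebraMap (ZMod 2) F b * ω * CharTwo.two_eq_zero (R := F)

lemma ofPair_trace (hω : ω ^ 2 = ω + 1) (a b c d : ZMod 2) :
    ofPair ω a b * ofPair ω c d ^ 2 + ofPair ω a b ^ 2 * ofPair ω c d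
      = algebraMap (ZMod 2) F (a * d + b * c) := by
  rw [ofPair_sq hω, ofPair_sq hω]
  simp only [ofPair, map_add, map_mul]
  set A := algebraMap (ZMod 2) F a
  set B := algebraMap (ZMod 2) F b
  set C := algebraMap (ZMod 2) F c
  set D := algebraMap (ZMod 2) F d
  linear_combination (2 * B * D) * hω
    + (A * C + B * D + (A * D + B * C + 2 * B * D) * ω) * CharTwo.two_eq_zero (R := F)

lemma ofPair_eq_zero (hω : ω ^ 2 = ω + 1) {a b : ZMod 2} (h : ofPair ω a b = 0) :
    a = 0 ∧ b = 0 := by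
  have hb : b = 0 := by
    rcases ZMod.eq_zero_or_eq_one b with hb | rfl
    · exact hb
    simp only [ofPair, map_one, one_mul] at h
    have : (1 : F) = 0 := by
      linear_combination (ω - algebraMap (ZMod 2) F a - 1) * h - hω + algebraMap_sq a
        + algebraMap (ZMod 2) F a * CharTwo.two_eq_zero (R := F)
    exact absurd this one_ne_zero
  subst hb
  simp only [ofPair, map_zero, zero_mul, add_zero] at h
  exact ⟨(algebraMap (ZMod 2) F).injective (h.trans (map_zero _).symm), rfl⟩

lemma pow_four_eq_self (x : F) : x ^ 4 = x := by
  let := Fintype.ofFinite F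
  have hcard : Fintype.card F = 4 := by
    rw [← Nat.card_eq_fintype_card, GaloisField.card 2 2 two_ne_zero]; rfl
  rw [← hcard, FiniteField.pow_card]

end GF4

structure Submodule.IsInformationSet {K ι : Type*} [Field K] [DecidableEq ι]
    (W : Submodule K (ι → K)) (S : Finset ι) : Prop where
  eq_zero : ∀ v ∈ W, (∀ i ∈ S, v i = 0) → v = 0
  exists_eq_single : ∀ j ∈ S, ∃ v ∈ W, ∀ i ∈ S, v i = (Pi.single j 1 : ι → K) i

-- A minimal `S` with the first property has the second: dropping `j` from `S` must fail.
theorem Submodule.exists_isInformationSet {K ι : Type*} [Field K] [Fintype ι] [DecidableEq ι]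
    (W : Submodule K (ι → K)) : ∃ S, W.IsInformationSet S := by
  obtain ⟨S, -, hS⟩ := exists_minimal_le_of_wellFoundedLT
    (fun S : Finset ι => ∀ v ∈ W, (∀ i ∈ S, v i = 0) → v = 0) Finset.univ
    fun v _ hv => funext fun i => hv i (Finset.mem_univ i)
  refine ⟨S, ⟨hS.prop, fun j hj => ?_⟩⟩
  have : ¬ ∀ v ∈ W, (∀ i ∈ S.erase j, v i = 0) → v = 0 := fun h =>
    Finset.notMem_erase j S (hS.le_of_le h (Finset.erase_subset j S) hj)
  push Not at this
  obtain ⟨v, hvW, hvS, hv⟩ := this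
  have hvj : v j ≠ 0 := fun hvj => hv <| hS.prop v hvW fun i hi =>
    if hij : i = j then hij ▸ hvj else hvS i (Finset.mem_erase.mpr ⟨hij, hi⟩)
  refine ⟨(v j)⁻¹ • v, W.smul_mem _ hvW, fun i hi => ?_⟩
  rcases eq_or_ne i j with rfl | hij
  · simp [hvj]
  · simp [hij, hvS i (Finset.mem_erase.mpr ⟨hij, hi⟩)]

open GF4

abbrev Pairs (n : ℕ) := (Fin n → ZMod 2) × (Fin n → ZMod 2)

section
variable {n : ℕ} {ω : F}

def ofPairsLin (ω : F) (n : ℕ) : Pairs n →ₗ[ZMod 2] (Fin n → F) where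
  toFun p i := ofPair ω (p.1 i) (p.2 i)
  map_add' p q := by
    ext i
    simp only [ofPair, Prod.fst_add, Prod.snd_add, Pi.add_apply, map_add]
    ring
  map_smul' c p := by
    ext i
    simp only [ofPair, Prod.smul_fst, Prod.smul_snd, Pi.smul_apply, smul_eq_mul, RingHom.id_apply]
    simp only [Algebra.smul_def, map_mul]
    ring

lemma ofPairsLin_injective (hω : ω ^ 2 = ω + 1) : Function.Injective (ofPairsLin ω n) := by
  rw [← LinearMap.ker_eq_bot, LinearMap.ker_eq_bot']
  intro p hp
  have h i := ofPair_eq_zero hω (congrFun hp i)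
  exact Prod.ext (funext fun i => (h i).1) (funext fun i => (h i).2)

lemma finrank_pairs : finrank (ZMod 2) (Pairs n) = finrank (ZMod 2) (Fin n → F) := by
  rw [finrank_prod, finrank_pi, finrank_pi_fintype, GaloisField.finrank 2 two_ne_zero]
  simp only [Fintype.card_fin, Finset.sum_const, Finset.card_univ, smul_eq_mul]
  ring

def ofPairsEquiv (hω : ω ^ 2 = ω + 1) (n : ℕ) : Pairs n ≃ₗ[ZMod 2] (Fin n → F) :=
  (ofPairsLin ω n).linearEquivOfInjective (ofPairsLin_injective hω) finrank_pairs

lemma ofPairsEquiv_apply (hω : ω ^ 2 = ω + 1) (p : Pairs n) (i : Fin n) :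
    ofPairsEquiv hω n p i = ofPair ω (p.1 i) (p.2 i) := rfl

def pairForm (n : ℕ) : LinearMap.BilinForm (ZMod 2) (Pairs n) :=
  LinearMap.mk₂ (ZMod 2) (fun p q => ∑ i, (p.1 i * q.2 i + p.2 i * q.1 i))
    (fun p p' q => by
      simp only [Prod.fst_add, Prod.snd_add, Pi.add_apply, ← Finset.sum_add_distrib]
      exact Finset.sum_congr rfl fun _ _ => by ring)
    (fun c p q => by
      simp only [Prod.smul_fst, Prod.smul_snd, Pi.smul_apply, smul_eq_mul, Finset.mul_sum]
      exact Finset.sum_congr rfl fun _ _ => by ring)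
    (fun p q q' => by
      simp only [Prod.fst_add, Prod.snd_add, Pi.add_apply, ← Finset.sum_add_distrib]
      exact Finset.sum_congr rfl fun _ _ => by ring)
    (fun c p q => by
      simp only [Prod.smul_fst, Prod.smul_snd, Pi.smul_apply, smul_eq_mul, Finset.mul_sum]
      exact Finset.sum_congr rfl fun _ _ => by ring)

lemma pairForm_apply (p q : Pairs n) :
    pairForm n p q = ∑ i, (p.1 i * q.2 i + p.2 i * q.1 i) := rfl

lemma pairForm_isRefl : (pairForm n).IsRefl := fun p q h => by
  rw [pairForm_apply] at h ⊢
  rw [← h]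
  exact Finset.sum_congr rfl fun _ _ => by ring

lemma pairForm_nondegenerate : (pairForm n).Nondegenerate := by
  refine (LinearMap.IsRefl.nondegenerate_iff_separatingLeft pairForm_isRefl).mpr fun p hp => ?_
  refine Prod.ext (funext fun i => ?_) (funext fun i => ?_)
  · simpa [pairForm_apply, Pi.single_apply] using hp (0, Pi.single i 1)
  · simpa [pairForm_apply, Pi.single_apply] using hp (Pi.single i 1, 0)

lemma trinner_ofPairsEquiv (hω : ω ^ 2 = ω + 1) (p q : Pairs n) :
    trinner (ofPairsEquiv hω n p) (ofPairsEquiv hω n q)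
      = algebraMap (ZMod 2) F (pairForm n p q) := by
  simp only [trinner, ofPairsEquiv_apply, ofPair_trace hω, pairForm_apply, map_sum]

def IsLagrangian (D : Submodule (ZMod 2) (Pairs n)) : Prop :=
  (pairForm n).orthogonal D = D

lemma isLagrangian_comap_of_eq_trdual (hω : ω ^ 2 = ω + 1) {C : Submodule (ZMod 2) (Fin n → F)}
    (hC : (C : Set (Fin n → F)) = trdual C) :
    IsLagrangian (C.comap (ofPairsEquiv hω n).toLinearMap) := by
  set ψ := ofPairsEquiv hω n
  ext q
  change (∀ p ∈ C.comap ψ.toLinearMap, pairForm n p q = 0) ↔ ψ q ∈ (C : Set (Fin n → F))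
  rw [hC]
  refine ⟨fun h u hu => ?_, fun h p hp => ?_⟩
  · obtain ⟨p, rfl⟩ := ψ.surjective u
    rw [trinner_ofPairsEquiv, h p hu, map_zero]
  · apply (algebraMap (ZMod 2) F).injective
    rw [map_zero, ← trinner_ofPairsEquiv hω]
    exact h _ hp

namespace IsLagrangian
variable {D : Submodule (ZMod 2) (Pairs n)}

lemma pairForm_eq_zero (hD : IsLagrangian D) {p q : Pairs n} (hp : p ∈ D) (hq : q ∈ D) :
    pairForm n p q = 0 := by
  rw [← hD] at hq
  exact LinearMap.BilinForm.mem_orthogonal_iff.mp hq p hp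

lemma finrank_eq (hD : IsLagrangian D) : finrank (ZMod 2) D = n := by
  have h := LinearMap.BilinForm.finrank_orthogonal pairForm_nondegenerate D
  have hle := Submodule.finrank_le D
  rw [hD, finrank_prod, finrank_fin_fun] at h
  rw [finrank_prod, finrank_fin_fun] at hle
  omega

lemma map (hD : IsLagrangian D) (e : Pairs n ≃ₗ[ZMod 2] Pairs n)
    (he : ∀ p q, pairForm n (e p) (e q) = pairForm n p q) :
    IsLagrangian (D.map e.toLinearMap) := by
  have key q : q ∈ (pairForm n).orthogonal (D.map e.toLinearMap) ↔
      e.symm q ∈ (pairForm n).orthogonal D := by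
    simp only [LinearMap.BilinForm.mem_orthogonal_iff]
    refine ⟨fun h p hp => ?_, ?_⟩
    · rw [← he, e.apply_symm_apply]
      exact h _ (Submodule.mem_map_of_mem hp)
    · rintro h _ ⟨p, hp, rfl⟩
      rw [LinearEquiv.coe_coe, ← e.apply_symm_apply q, he]
      exact h p hp
  ext q
  rw [key, hD, Submodule.mem_map_equiv]

end IsLagrangian

def swapOn (S : Finset (Fin n)) : Pairs n ≃ₗ[ZMod 2] Pairs n :=
  LinearEquiv.ofInvolutive
    { toFun p := (fun i => if i ∈ S then p.2 i else p.1 i, fun i => if i ∈ S then p.1 i else p.2 i)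
      map_add' p q := by ext i <;> dsimp <;> split_ifs <;> rfl
      map_smul' c p := by ext i <;> dsimp <;> split_ifs <;> rfl }
    fun p => by ext i <;> dsimp <;> split_ifs <;> rfl

def shearOn (T : Finset (Fin n)) : Pairs n ≃ₗ[ZMod 2] Pairs n :=
  LinearEquiv.ofInvolutive
    { toFun p := (fun i => if i ∈ T then p.1 i + p.2 i else p.1 i, p.2)
      map_add' p q := Prod.ext (funext fun i => by dsimp; split_ifs <;> ring) rfl
      map_smul' c p := Prod.ext (funext fun i => by dsimp; split_ifs <;> ring) rfl }
    fun p => Prod.ext (funext fun i => by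
      dsimp; split_ifs <;> simp [add_assoc, CharTwo.add_self_eq_zero]) rfl

lemma swapOn_apply (S : Finset (Fin n)) (p : Pairs n) :
    swapOn S p =
      (fun i => if i ∈ S then p.2 i else p.1 i, fun i => if i ∈ S then p.1 i else p.2 i) := rfl

lemma swapOn_swapOn (S : Finset (Fin n)) (p : Pairs n) : swapOn S (swapOn S p) = p :=
  (swapOn S).symm_apply_apply p

lemma shearOn_apply (T : Finset (Fin n)) (p : Pairs n) :
    shearOn T p = (fun i => if i ∈ T then p.1 i + p.2 i else p.1 i, p.2) := rfl

lemma pairForm_swapOn (S : Finset (Fin n)) (p q : Pairs n) :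
    pairForm n (swapOn S p) (swapOn S q) = pairForm n p q := by
  rw [pairForm_apply, pairForm_apply]
  exact Finset.sum_congr rfl fun i _ => by simp only [swapOn_apply]; split_ifs <;> ring

namespace IsLagrangian
variable {D : Submodule (ZMod 2) (Pairs n)}

lemma eq_zero_of_mem_map_swapOn (hD : IsLagrangian D) {S : Finset (Fin n)}
    (hS : (D.comap (LinearMap.inl (ZMod 2) _ _)).IsInformationSet S) {a : Fin n → ZMod 2}
    (ha : (a, 0) ∈ D.map (swapOn S).toLinearMap) : a = 0 := by
  obtain ⟨p, hp, hpa⟩ := ha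
  have hp_eq : p = swapOn S (a, 0) := by rw [← hpa, LinearEquiv.coe_coe, swapOn_swapOn]
  have haS : ∀ j ∈ S, a j = 0 := fun j hj => by
    obtain ⟨v, hv, hvS⟩ := hS.exists_eq_single j hj
    calc a j = ∑ i, (Pi.single j 1 : Fin n → ZMod 2) i * (if i ∈ S then a i else 0) := by
          simp [Pi.single_apply, hj]
      _ = pairForm n (v, 0) p := by
        rw [pairForm_apply, hp_eq]
        refine Finset.sum_congr rfl fun i _ => ?_
        simp only [swapOn_apply, Pi.zero_apply, zero_mul, add_zero]
        split_ifs with hi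
        · rw [hvS i hi]
        · rw [mul_zero, mul_zero]
      _ = 0 := hD.pairForm_eq_zero hv hp
  have hp_eq' : p = (a, 0) := by
    rw [hp_eq, swapOn_apply]
    ext i <;> by_cases hi : i ∈ S <;> simp [hi, haS]
  exact hS.eq_zero a (by rwa [Submodule.mem_comap, LinearMap.inl_apply, ← hp_eq']) haS

lemma exists_isSymm_eq_span (hD : IsLagrangian D) (hker : ∀ a, (a, 0) ∈ D → a = 0) :
    ∃ A : Matrix (Fin n) (Fin n) (ZMod 2), A.IsSymm ∧
      D = Submodule.span (ZMod 2) (Set.range fun i => (A i, Pi.single i 1)) := by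
  set π := (LinearMap.snd (ZMod 2) (Fin n → ZMod 2) (Fin n → ZMod 2)).comp D.subtype
  have hπ_inj : Function.Injective π := by
    rw [← LinearMap.ker_eq_bot, LinearMap.ker_eq_bot']
    rintro ⟨p, hp⟩ (h : p.2 = 0)
    exact Subtype.ext (Prod.ext (hker p.1 (by rwa [← h])) h)
  have hπ_surj : Function.Surjective π :=
    (LinearMap.injective_iff_surjective_of_finrank_eq_finrank
      (by rw [hD.finrank_eq, finrank_fin_fun])).mp hπ_inj
  choose r hr using fun i => hπ_surj (Pi.single i 1)
  have hr2 i : (r i : Pairs n).2 = Pi.single i 1 := hr i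
  have hrows : (fun i => ((r i : Pairs n).1, (Pi.single i 1 : Fin n → ZMod 2))) =
      fun i => (r i : Pairs n) :=
    funext fun i => Prod.ext rfl (hr2 i).symm
  refine ⟨Matrix.of fun i => (r i : Pairs n).1, Matrix.IsSymm.ext fun i j => ?_, ?_⟩
  · have h := hD.pairForm_eq_zero (r i).2 (r j).2
    simp only [pairForm_apply, hr2, Pi.single_apply, mul_ite, ite_mul, mul_one, one_mul, mul_zero,
      zero_mul, Finset.sum_add_distrib, Finset.sum_ite_eq', Finset.mem_univ, if_true] at h
    exact (CharTwo.add_eq_zero.mp h).symm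
  · change D = Submodule.span _ (Set.range fun i => ((r i : Pairs n).1, Pi.single i 1))
    rw [hrows]
    refine (Submodule.eq_of_le_of_finrank_eq (Submodule.span_le.mpr ?_) ?_).symm
    · rintro _ ⟨i, rfl⟩
      exact (r i).2
    · rw [finrank_span_eq_card, Fintype.card_fin, hD.finrank_eq]
      exact LinearIndependent.of_comp (LinearMap.snd (ZMod 2) _ _)
        (by simpa [Function.comp_def, hr2] using Pi.linearIndependent_single_one (Fin n) (ZMod 2))

end IsLagrangian

lemma exists_map_shearOn_span_eq_adjMatrix {A : Matrix (Fin n) (Fin n) (ZMod 2)}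
    (hA : A.IsSymm) :
    ∃ (T : Finset (Fin n)) (G : SimpleGraph (Fin n)),
      (Submodule.span (ZMod 2) (Set.range fun i => (A i, Pi.single i 1))).map
          (shearOn T).toLinearMap =
        Submodule.span (ZMod 2) (Set.range fun i => (G.adjMatrix (ZMod 2) i, Pi.single i 1)) := by
  set A' : Matrix (Fin n) (Fin n) (ZMod 2) := Matrix.of fun i j => if i = j then 0 else A i j
  have hA' : A'.IsAdjMatrix :=
    { zero_or_one := fun i j => ZMod.eq_zero_or_eq_one _
      symm := Matrix.IsSymm.ext fun i j => by simp [A', eq_comm, hA.apply i j]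
      apply_diag := by simp [A'] }
  refine ⟨Finset.univ.filter fun i => A i i = 1, hA'.toGraph, ?_⟩
  rw [Submodule.map_span, ← Set.range_comp]
  congr 2
  funext i
  refine Prod.ext (funext fun j => ?_) rfl
  simp only [Function.comp_apply, LinearEquiv.coe_coe, shearOn_apply, Finset.mem_filter,
    Finset.mem_univ, true_and, SimpleGraph.adjMatrix_apply, Matrix.IsAdjMatrix.toGraph_adj, A',
    Matrix.of_apply, Pi.single_apply]
  rcases eq_or_ne j i with rfl | hji
  · rcases ZMod.eq_zero_or_eq_one (A j j) with h | h <;> simp [h, CharTwo.add_self_eq_zero]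
  · rcases ZMod.eq_zero_or_eq_one (A i j) with h | h <;> simp [h, hji, hji.symm]

lemma graphCode_eq_map_span (hω : ω ^ 2 = ω + 1) (G : SimpleGraph (Fin n)) :
    graphCode ω G = (Submodule.span (ZMod 2)
      (Set.range fun i => (G.adjMatrix (ZMod 2) i, Pi.single i 1))).map
        (ofPairsEquiv hω n).toLinearMap := by
  rw [graphCode, Submodule.map_span, ← Set.range_comp]
  congr 2
  funext i j
  simp only [Function.comp_apply, LinearEquiv.coe_coe, ofPairsEquiv_apply, ofPair, graphRow,
    SimpleGraph.adjMatrix_apply, Pi.single_apply]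
  rcases eq_or_ne i j with rfl | hij
  · simp
  · simp [hij, hij.symm, apply_ite (algebraMap (ZMod 2) F)]

def conjOn (T : Finset (Fin n)) (u : Fin n → F) : Fin n → F :=
  fun i => if i ∈ T then u i ^ 2 else u i

def mulConjOn (ω : F) (S : Finset (Fin n)) (u : Fin n → F) : Fin n → F :=
  fun i => if i ∈ S then ω * u i ^ 2 else u i

lemma ofPairsEquiv_shearOn (hω : ω ^ 2 = ω + 1) (T : Finset (Fin n)) (p : Pairs n) :
    ofPairsEquiv hω n (shearOn T p) = conjOn T (ofPairsEquiv hω n p) := by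
  funext i
  simp only [conjOn, ofPairsEquiv_apply, shearOn_apply]
  split_ifs
  · exact (ofPair_sq hω _ _).symm
  · rfl

lemma ofPairsEquiv_swapOn (hω : ω ^ 2 = ω + 1) (S : Finset (Fin n)) (p : Pairs n) :
    ofPairsEquiv hω n (swapOn S p) = mulConjOn ω S (ofPairsEquiv hω n p) := by
  funext i
  simp only [mulConjOn, ofPairsEquiv_apply, swapOn_apply]
  split_ifs
  · exact ofPair_swap hω _ _
  · rfl

lemma isEquivMap_conjOn_comp_mulConjOn (hω : ω ^ 2 = ω + 1) (S T : Finset (Fin n)) :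
    IsEquivMap (conjOn T ∘ mulConjOn ω S) := by
  have hω0 : ω ≠ 0 := by rintro rfl; simp at hω
  refine ⟨Equiv.refl _, fun i => if i ∈ S then (if i ∈ T then ω ^ 2 else ω) else 1,
    fun i => if i ∈ S then (if i ∈ T then 1 else 2) else (if i ∈ T then 2 else 1),
    fun i => ?_, fun i => ?_, fun u i => ?_⟩
  · dsimp only; split_ifs <;> simp [hω0]
  · dsimp only; split_ifs <;> simp
  · simp only [Function.comp_apply, conjOn, mulConjOn, Equiv.refl_apply]
    split_ifs
    · rw [mul_pow, ← pow_mul, pow_four_eq_self, pow_one]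
    all_goals ring

end

theorem stmt5 (n : ℕ) (ω : GaloisField 2 2) (hω : ω ^ 2 = ω + 1)
    (C : Submodule (ZMod 2) (Fin n → GaloisField 2 2))
    (hC : (C : Set (Fin n → GaloisField 2 2)) = trdual (C : Set (Fin n → GaloisField 2 2))) :
    ∃ (G : SimpleGraph (Fin n))
      (f : (Fin n → GaloisField 2 2) → (Fin n → GaloisField 2 2)),
      IsEquivMap f ∧ f '' (C : Set (Fin n → GaloisField 2 2)) =
        (graphCode ω G : Set (Fin n → GaloisField 2 2)) := by
  set ψ := ofPairsEquiv hω n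
  set D := C.comap ψ.toLinearMap
  have hD : IsLagrangian D := isLagrangian_comap_of_eq_trdual hω hC
  obtain ⟨S, hS⟩ := (D.comap (LinearMap.inl (ZMod 2) _ _)).exists_isInformationSet
  obtain ⟨A, hA, hspan⟩ := (hD.map (swapOn S) (pairForm_swapOn S)).exists_isSymm_eq_span
    fun _ => hD.eq_zero_of_mem_map_swapOn hS
  obtain ⟨T, G, hG⟩ := exists_map_shearOn_span_eq_adjMatrix hA
  have hlocal : conjOn T ∘ mulConjOn ω S ∘ ψ = ψ ∘ shearOn T ∘ swapOn S :=
    funext fun p => by simp only [Function.comp_apply, ofPairsEquiv_shearOn, ofPairsEquiv_swapOn, ψ]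
  refine ⟨G, conjOn T ∘ mulConjOn ω S, isEquivMap_conjOn_comp_mulConjOn hω S T, ?_⟩
  rw [graphCode_eq_map_span hω, ← hG, ← hspan,
    ← Submodule.map_comap_eq_of_surjective ψ.surjective C]
  simp only [Submodule.map_coe, Set.image_image]
  exact congrArg (· '' (D : Set (Pairs n))) hlocal
end
end

section
/- Let G be a simple undirected graph on vertices {1,…,n} and let v be a vertex. Then the graph codes 𝒞(G) and 𝒞(G^v) are equivalent: there is a code equivalence map f of GF(4)^n with f(𝒞(G)) = 𝒞(G^v), where G^v is the local complement of G at v. -/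
open Finset
open scoped Classical

noncomputable section

/-- Local complementation of a simple graph `G` at a vertex `v`: distinct vertices
`i, j` are adjacent in `G^v` iff exactly one of the following holds: `i` and `j`
are adjacent in `G`, or both `i` and `j` are neighbours of `v` in `G`. -/
def localComp {V : Type*} (G : SimpleGraph V) (v : V) : SimpleGraph V where
  Adj i j := i ≠ j ∧ Xor' (G.Adj i j) (G.Adj v i ∧ G.Adj v j)
  symm := by
    constructor
    intro i j hij
    refine ⟨hij.1.symm, ?_⟩
    rw [G.adj_comm j i, and_comm]
    exact hij.2
  loopless := ⟨fun i h => h.1 rfl⟩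

/-! The equivalence multiplies coordinate `v` by `ω²` and applies the Frobenius `x ↦ x²` at `v`
and at the neighbours of `v`. In characteristic 2 this map is additive, hence `GF(2)`-linear.
Writing `Γ'` for the adjacency matrix of `G^v` and using `ω² = ω + 1`, `ω⁴ = ω`, one checks
entrywise that it sends row `i` of `Γ + ωI` to row `i` of `Γ' + ωI` when `i` is not a neighbour
of `v`, and to the sum of rows `i` and `v` of `Γ' + ωI` when it is. Such a unitriangular change
of generators does not change the span. -/

namespace Submodule

variable {R M ι : Type*} [Ring R] [AddCommGroup M] [Module R M]

theorem span_range_add_smul_eq (h : ι → M) (v : ι) (a : ι → R) (hav : a v = 0) :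
    span R (Set.range fun i => h i + a i • h v) = span R (Set.range h) := by
  have hmem (i : ι) : h i ∈ span R (Set.range h) := subset_span ⟨i, rfl⟩
  have hg (i : ι) : h i + a i • h v ∈ span R (Set.range fun i => h i + a i • h v) :=
    subset_span ⟨i, rfl⟩
  have hv : h v ∈ span R (Set.range fun i => h i + a i • h v) := by
    simpa [hav] using hg v
  apply le_antisymm <;> rw [span_le] <;> rintro _ ⟨i, rfl⟩
  · exact add_mem (hmem i) (smul_mem _ _ (hmem v))
  · simpa using sub_mem (hg i) (smul_mem _ (a i) hv)

end Submodule

def scaleFrobeniusMap {ι K : Type*} [CommSemiring K] [CharP K 2] (c : ι → K) (s : Set ι) :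
    (ι → K) →+ (ι → K) where
  toFun u i := c i * u i ^ (if i ∈ s then 2 else 1)
  map_zero' := by ext i; split_ifs <;> simp
  map_add' u w := by ext i; by_cases hi : i ∈ s <;> simp [hi, CharTwo.add_sq, mul_add]

theorem isEquivMap_scaleFrobeniusMap {n : ℕ} (c : Fin n → GaloisField 2 2) (hc : ∀ i, c i ≠ 0)
    (s : Set (Fin n)) : IsEquivMap (scaleFrobeniusMap c s) :=
  ⟨Equiv.refl _, c, fun i => if i ∈ s then 2 else 1, hc, fun _ => (ite_eq_or_eq _ _ _).symm,
    fun _ _ => rfl⟩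

theorem localComp_adj_iff {V : Type*} (G : SimpleGraph V) (v i j : V) :
    (localComp G v).Adj i j ↔
      i ≠ j ∧ (G.Adj i j ∧ ¬(G.Adj v i ∧ G.Adj v j) ∨ (G.Adj v i ∧ G.Adj v j) ∧ ¬G.Adj i j) :=
  Iff.rfl

section LocalComplement

variable {n : ℕ} (ω : GaloisField 2 2) (G : SimpleGraph (Fin n)) (v : Fin n)

def localCompMap : (Fin n → GaloisField 2 2) →ₗ[ZMod 2] (Fin n → GaloisField 2 2) :=
  (scaleFrobeniusMap (fun i => if i = v then ω ^ 2 else 1)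
    (insert v (G.neighborSet v))).toZModLinearMap 2

theorem isEquivMap_localCompMap (hω : ω ≠ 0) : IsEquivMap (localCompMap ω G v) :=
  isEquivMap_scaleFrobeniusMap _ (fun i => by split_ifs <;> simp [hω]) _

variable {ω}

theorem localCompMap_graphRow (hω : ω ^ 2 = ω + 1) (i : Fin n) :
    localCompMap ω G v (graphRow ω G i) = graphRow ω (localComp G v) i +
      (if G.Adj v i then 1 else 0 : ZMod 2) • graphRow ω (localComp G v) v := by
  have hω4 : ω ^ 2 * ω ^ 2 = ω := by
    linear_combination (ω ^ 2 + ω + 2) * hω + (ω + 1) * CharTwo.two_eq_zero (R := GaloisField 2 2)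
  funext j
  simp only [localCompMap, AddMonoidHom.coe_toZModLinearMap, scaleFrobeniusMap,
    AddMonoidHom.coe_mk, ZeroHom.coe_mk, graphRow, localComp_adj_iff, Set.mem_insert_iff,
    SimpleGraph.mem_neighborSet, Pi.add_apply, Pi.smul_apply]
  split_ifs <;> simp_all [G.adj_comm, CharTwo.add_self_eq_zero, add_comm 1 ω]

theorem map_localCompMap_graphCode (hω : ω ^ 2 = ω + 1) :
    (graphCode ω G).map (localCompMap ω G v) = graphCode ω (localComp G v) := by
  rw [graphCode, graphCode, Submodule.map_span, ← Set.range_comp, Function.comp_def]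
  simp only [localCompMap_graphRow G v hω]
  exact Submodule.span_range_add_smul_eq _ v _ (by simp)

end LocalComplement

theorem stmt7 (n : ℕ) (ω : GaloisField 2 2) (hω : ω ^ 2 = ω + 1)
    (G : SimpleGraph (Fin n)) (v : Fin n) :
    ∃ f : (Fin n → GaloisField 2 2) → (Fin n → GaloisField 2 2),
      IsEquivMap f ∧
        f '' (graphCode ω G : Set (Fin n → GaloisField 2 2)) =
          (graphCode ω (localComp G v) : Set (Fin n → GaloisField 2 2)) := by
  have hω0 : ω ≠ 0 := by
    rintro rfl
    simp at hω
  refine ⟨localCompMap ω G v, isEquivMap_localCompMap ω G v hω0, ?_⟩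
  rw [← Submodule.map_coe, map_localCompMap_graphCode G v hω]
end
end

section
/- Let G be a simple undirected graph on vertices {1,…,n}. Every codeword of the graph code 𝒞(G) has even Hamming weight (i.e., 𝒞(G) is of Type II) if and only if every vertex of G has odd degree (i.e., G is anti-Eulerian). -/
/-! Write a codeword as `u = ∑ i, c i • row i` with `c ∈ GF(2)^n`. Its `j`-th coordinate is
`c j • ω + (Γ c) j`, which vanishes iff `c j = (Γ c) j = 0`, since `1` and `ω` are independent
over `GF(2)`. Hence, mod 2,
`wt u = ∑ j, (c j + (Γ c) j + c j (Γ c) j) = ∑ j, c j (1 + deg j) + cᵀ Γ c`,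
and `cᵀ Γ c = 0` because `Γ` is symmetric with zero diagonal. So all codewords are even iff
`1 + deg j = 0` in `GF(2)` for every `j`. -/

open Finset
open scoped Classical

noncomputable section

/-- The Hamming weight of a vector in `GF(4)^n`. -/
def wt {n : ℕ} (u : Fin n → GaloisField 2 2) : ℕ :=
  (Finset.univ.filter fun i => u i ≠ 0).card

open scoped Matrix

theorem ZModModule.smul_add_smul_eq_zero_iff {M : Type*} [AddCommGroup M] [Module (ZMod 2) M]
    {v w : M} (hv : v ≠ 0) (hw : w ≠ 0) (hvw : v ≠ w) (x y : ZMod 2) :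
    x • v + y • w = 0 ↔ x = 0 ∧ y = 0 := by
  have hvw' : v + w ≠ 0 := by
    rwa [ne_eq, add_eq_zero_iff_eq_neg, ZModModule.neg_eq_self]
  have h01 : ∀ z : ZMod 2, z = 0 ∨ z = 1 := by decide
  obtain rfl | rfl := h01 x <;> obtain rfl | rfl := h01 y <;> simp [hv, hw, hvw']

theorem ZModModule.sum_sum_eq_zero_of_symm {ι M : Type*} [Fintype ι] [AddCommGroup M]
    [Module (ZMod 2) M] (f : ι → ι → M) (hsymm : ∀ i j, f i j = f j i)
    (hdiag : ∀ i, f i i = 0) :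
    ∑ i, ∑ j, f i j = 0 := by
  rw [← Finset.sum_product']
  refine Finset.sum_ninvolution Prod.swap (fun p => ?_) (fun p hp hfix => hp ?_)
    (fun _ => mem_univ _) Prod.swap_swap
  · rw [Prod.fst_swap, Prod.snd_swap, ← hsymm, ZModModule.add_self]
  · rw [← Prod.fst_swap (p := p), hfix, hdiag]

theorem SimpleGraph.dotProduct_adjMatrix_mulVec_self {V : Type*} [Fintype V] (G : SimpleGraph V)
    [DecidableRel G.Adj] (x : V → ZMod 2) : x ⬝ᵥ G.adjMatrix (ZMod 2) *ᵥ x = 0 := by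
  rw [SimpleGraph.dotProduct_mulVec_adjMatrix]
  refine ZModModule.sum_sum_eq_zero_of_symm _ (fun i j => ?_) (fun i => by simp)
  simp only [G.adj_comm i j, mul_comm]

theorem ZMod.ite_eq_zero_and_eq_zero (x y : ZMod 2) :
    (if x = 0 ∧ y = 0 then 0 else 1 : ZMod 2) = x + y + x * y := by
  revert x y; decide

theorem natCast_wt {R : Type*} [AddCommMonoidWithOne R] {n : ℕ}
    (u : Fin n → GaloisField 2 2) :
    (wt u : R) = ∑ j, if u j = 0 then 0 else 1 := by
  simp only [wt, natCast_card_filter, ite_not]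

theorem graphRow_apply_eq {n : ℕ} (ω : GaloisField 2 2) (G : SimpleGraph (Fin n))
    [DecidableRel G.Adj] (i j : Fin n) :
    graphRow ω G i j = (if i = j then ω else 0) + G.adjMatrix (ZMod 2) j i • 1 := by
  by_cases hij : i = j
  · subst hij; simp [graphRow]
  · simp [graphRow, hij, G.adj_comm j i]

theorem sum_smul_graphRow_apply {n : ℕ} (ω : GaloisField 2 2) (G : SimpleGraph (Fin n))
    [DecidableRel G.Adj] (c : Fin n → ZMod 2) (j : Fin n) :
    (∑ i, c i • graphRow ω G i) j = c j • ω + (G.adjMatrix (ZMod 2) *ᵥ c) j • 1 := by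
  simp only [Finset.sum_apply, Pi.smul_apply, graphRow_apply_eq, smul_add, sum_add_distrib,
    smul_ite, smul_zero, sum_ite_eq', mem_univ, if_true, Matrix.mulVec,
    dotProduct, sum_smul, mul_smul]
  exact congrArg _ (sum_congr rfl fun i _ => smul_comm _ _ _)

theorem SimpleGraph.sum_adjMatrix_mulVec {V R : Type*} [Fintype V] [Semiring R]
    (G : SimpleGraph V) [DecidableRel G.Adj] (x : V → R) :
    ∑ v, (G.adjMatrix R *ᵥ x) v = ∑ v, G.degree v * x v := by
  rw [← one_dotProduct, Matrix.dotProduct_mulVec]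
  simp [dotProduct]

theorem natCast_wt_sum_smul_graphRow {n : ℕ} {ω : GaloisField 2 2} (hω0 : ω ≠ 0)
    (hω1 : ω ≠ 1) (G : SimpleGraph (Fin n)) [DecidableRel G.Adj] (c : Fin n → ZMod 2) :
    (wt (∑ i, c i • graphRow ω G i) : ZMod 2) = ∑ i, c i * (1 + G.degree i) := by
  set b := G.adjMatrix (ZMod 2) *ᵥ c
  have hzero (j : Fin n) : (∑ i, c i • graphRow ω G i) j = 0 ↔ c j = 0 ∧ b j = 0 := by
    rw [sum_smul_graphRow_apply]
    exact ZModModule.smul_add_smul_eq_zero_iff hω0 one_ne_zero hω1 _ _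
  calc (wt (∑ i, c i • graphRow ω G i) : ZMod 2)
      = ∑ j, (c j + b j + c j * b j) := by
        simp only [natCast_wt, hzero, ZMod.ite_eq_zero_and_eq_zero]
    _ = ∑ j, c j + ∑ j, b j + c ⬝ᵥ b := by rw [sum_add_distrib, sum_add_distrib]; rfl
    _ = ∑ j, c j + ∑ j, G.degree j * c j := by
        rw [G.dotProduct_adjMatrix_mulVec_self, add_zero, G.sum_adjMatrix_mulVec]
    _ = ∑ i, c i * (1 + G.degree i) := by
        rw [← sum_add_distrib]
        exact sum_congr rfl fun i _ => by ring

theorem stmt10 (n : ℕ) (ω : GaloisField 2 2) (hω : ω ^ 2 = ω + 1)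
    (G : SimpleGraph (Fin n)) [DecidableRel G.Adj] :
    (∀ u ∈ graphCode ω G, Even (wt u)) ↔ ∀ v : Fin n, Odd (G.degree v) := by
  have hω0 : ω ≠ 0 := by
    rintro rfl
    simp at hω
  have hω1 : ω ≠ 1 := by
    rintro rfl
    simp [CharTwo.add_self_eq_zero] at hω
  simp only [graphCode, Submodule.mem_span_range_iff_exists_fun, forall_exists_index,
    forall_apply_eq_imp_iff, ← ZMod.natCast_eq_zero_iff_even,
    natCast_wt_sum_smul_graphRow hω0 hω1, ← ZMod.natCast_eq_one_iff_odd]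
  constructor
  · intro h v
    have hv := h (Pi.single v 1)
    simp only [Pi.single_apply, ite_mul, one_mul, zero_mul, sum_ite_eq', mem_univ, if_true,
      CharTwo.add_eq_zero] at hv
    exact hv.symm
  · intro h c
    simp only [h, CharTwo.add_self_eq_zero, mul_zero, sum_const_zero]
end
end
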